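/- Let (A, R) be a Rota-Baxter algebra of weight zero and define ω₁(x,y,z) = R(x)·y·R(z), ω₂(x,y,z) = x·R(y·R(z)), ω₃(x,y,z) = x·R(R(y)·z). Then for all v, w, x, y, z ∈ A one has ω₂(v, ω₁(w,x,y), z) = ω₃(v, w, ω₂(x,y,z)) + ω₃(v, w, ω₃(x,y,z)), where ω₂(v, ω₁(w,x,y), z) = v·R(ω₁(w,x,y)·R(z)). -/
import Mathlib


theorem STMT {A : Type*} [NonUnitalRing A] [Module ℚ A]
    [SMulCommClass ℚ A A] [IsScalarTower ℚ A A]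
    (R : A →ₗ[ℚ] A)
    (hR : ∀ x y : A, R x * R y = R (R x * y) + R (x * R y)) :
    ∀ v w x y z : A,
      (fun x y z : A => x * R (y * R z)) v ((fun x y z : A => R x * y * R z) w x y) z = (fun x y z : A => x * R (R y * z)) v w ((fun x y z : A => x * R (y * R z)) x y z) + (fun x y z : A => x * R (R y * z)) v w ((fun x y z : A => x * R (R y * z)) x y z) := by
  intro v w x y z
  simp only
  rw [mul_assoc (R w * x) (R y) (R z), hR, mul_add, map_add, mul_add]
  rw [mul_assoc (R w) x, mul_assoc (R w) x, add_comm]
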